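/- For every unit c of ℤ/p^kℤ, one has the identity 2·ε·Σ b² = −(p+1)·p^{k−1}·c in ℤ/p^kℤ, where the sum runs over all pairs (a, b) ∈ (ℤ/p^kℤ)² satisfying a² − εb² = c. -/

import Mathlib

/-!
Write `A = (ℤ/p^kℤ)[√ε]`, so that the pairs `(a, b)` are the elements `z = a + b√ε` of norm `c`.
Multiplication by `1 + √ε` and by `1 - √ε`, units of the same norm `1 - ε`, maps the fibre
`N⁻¹(c)` bijectively onto `N⁻¹((1 - ε) c)`, so `(1 + √ε)² Σ z² = (1 - √ε)² Σ z²`, i.e.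
`4√ε Σ z² = 0`, whence `Σ z² = 0`. Its rational part is `Σ (a² + εb²) = 0`, while
`Σ (a² - εb²) = |N⁻¹(c)| c`; subtracting gives `2ε Σ b² = -|N⁻¹(c)| c`.

The norm is onto the units of `ℤ/p^kℤ`: it is onto modulo `p` (finite field), and what is left is
a unit `≡ 1 (mod p)`, which is a square because squaring is injective, hence bijective, on
`1 + pℤ/p^kℤ`.
So every fibre over a unit has the size of the kernel, and the `p^{2k} - p^{2k-2}` units of `A`
(`a` or `b` a unit, as `ε` is not a square mod `p`) are spread evenly over the `p^k - p^{k-1}`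
units of `ℤ/p^kℤ`: each fibre has `(p + 1) p^{k-1}` elements.
-/

open Finset QuadraticAlgebra

theorem Finset.card_filter_isUnit {M : Type*} [Monoid M] [Fintype M] [DecidableEq M]
    [DecidablePred (IsUnit : M → Prop)] :
    #{x : M | IsUnit x} = Fintype.card Mˣ :=
  calc #{x : M | IsUnit x} = #(univ.map ⟨Units.val, Units.val_injective⟩) :=
        congrArg card <| by
          ext x
          simp only [mem_filter, mem_univ, true_and, mem_map, Function.Embedding.coeFn_mk]
          rfl
    _ = Fintype.card Mˣ := card_map _

section Fibres

variable {A B M : Type*} [Monoid A] [Fintype A] [Monoid B] [DecidableEq B] (N : A →* B)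

theorem MonoidHom.sum_filter_apply_eq_mul_left [AddCommMonoid M] {u : A} (hu : IsUnit u) (c : B)
    (f : A → M) :
    ∑ z ∈ univ.filter (fun z => N z = c), f (u * z) =
      ∑ z ∈ univ.filter (fun z => N z = N u * c), f z :=
  sum_equiv (Units.mulLeft hu.unit) (fun z => by simp [(hu.map N).mul_right_inj]) fun _ _ => rfl

theorem MonoidHom.card_filter_apply_eq_of_isUnit {u : A} (hu : IsUnit u) :
    #{z | N z = N u} = #{z | N z = 1} := by
  simpa only [card_eq_sum_ones, mul_one] using
    (N.sum_filter_apply_eq_mul_left hu 1 fun _ => 1).symm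

open scoped Classical in
theorem MonoidHom.card_filter_isUnit_eq_mul [Fintype B]
    (hN : ∀ b, IsUnit b → ∃ z, IsUnit z ∧ N z = b) :
    #{z | IsUnit (N z)} = Fintype.card Bˣ * #{z | N z = 1} := by
  have hfibre (b : Bˣ) : #{z ∈ {z | IsUnit (N z)} | N z = b} = #{z | N z = 1} := by
    obtain ⟨z₀, hz₀, hb⟩ := hN b b.isUnit
    rw [filter_filter, ← N.card_filter_apply_eq_of_isUnit hz₀, hb]
    exact congrArg card <| filter_congr fun z _ => and_iff_right_of_imp fun h => h ▸ b.isUnit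
  rw [card_eq_sum_card_fiberwise (f := N) (t := univ.map ⟨Units.val, Units.val_injective⟩)
    fun z hz => mem_map_of_mem _ (mem_univ (mem_filter.mp hz).2.unit), sum_map]
  simp only [Function.Embedding.coeFn_mk, hfibre, sum_const, card_univ, smul_eq_mul]

end Fibres

namespace QuadraticAlgebra

variable {R : Type*} [CommRing R]

instance [Fintype R] (a b : R) : Fintype (QuadraticAlgebra R a b) :=
  Fintype.ofEquiv _ (equivProd a b).symm

variable {a : R}

theorem norm_eq_re_sq_sub_mul_im_sq (z : QuadraticAlgebra R a 0) :
    norm z = z.re ^ 2 - a * z.im ^ 2 := by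
  rw [norm_def]; ring

variable [Fintype R] [DecidableEq R]

theorem sum_filter_sq_sub_mul_sq_eq {M : Type*} [AddCommMonoid M] (c : R) (f : R × R → M) :
    ∑ v ∈ univ.filter (fun v : R × R => v.1 ^ 2 - a * v.2 ^ 2 = c), f v =
      ∑ z ∈ univ.filter (fun z : QuadraticAlgebra R a 0 => norm z = c), f (z.re, z.im) :=
  sum_equiv (equivProd a 0).symm (by simp [norm_eq_re_sq_sub_mul_im_sq]) fun _ _ => rfl

theorem sum_sq_filter_norm_eq_zero (h2 : IsUnit (2 : R)) (ha : IsUnit a) (h1a : IsUnit (1 - a))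
    (c : R) : ∑ z ∈ univ.filter (fun z : QuadraticAlgebra R a 0 => norm z = c), z ^ 2 = 0 := by
  set S := univ.filter (fun z : QuadraticAlgebra R a 0 => norm z = c)
  have hnorm_add : norm (1 + ω : QuadraticAlgebra R a 0) = 1 - a := by
    simp [norm_eq_re_sq_sub_mul_im_sq]
  have hnorm_sub : norm (1 - ω : QuadraticAlgebra R a 0) = 1 - a := by
    simp [norm_eq_re_sq_sub_mul_im_sq]
  have hmul (u : QuadraticAlgebra R a 0) (hu : IsUnit (norm u)) :
      u ^ 2 * ∑ z ∈ S, z ^ 2 = ∑ z ∈ univ.filter (fun z => norm z = norm u * c), z ^ 2 := by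
    simp only [mul_sum, ← mul_pow]
    exact norm.sum_filter_apply_eq_mul_left (isUnit_iff_norm_isUnit.mpr hu) c (· ^ 2)
  have h4ω : IsUnit (4 * ω : QuadraticAlgebra R a 0) := by
    have : norm (4 * ω : QuadraticAlgebra R a 0) = -(2 ^ 4 * a) := by
      simp only [norm_eq_re_sq_sub_mul_im_sq, re_mul, im_mul, re_ofNat, im_ofNat, omega_re,
        omega_im]
      ring
    rw [isUnit_iff_norm_isUnit, this]
    exact ((h2.pow 4).mul ha).neg
  refine h4ω.mul_right_eq_zero.mp ?_
  calc 4 * ω * ∑ z ∈ S, z ^ 2 = (1 + ω) ^ 2 * ∑ z ∈ S, z ^ 2 - (1 - ω) ^ 2 * ∑ z ∈ S, z ^ 2 := by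
        ring
    _ = 0 := by
      rw [hmul _ (hnorm_add ▸ h1a), hmul _ (hnorm_sub ▸ h1a), hnorm_add, hnorm_sub, sub_self]

theorem two_mul_mul_sum_im_sq_filter_norm_eq (h2 : IsUnit (2 : R)) (ha : IsUnit a)
    (h1a : IsUnit (1 - a)) (c : R) :
    2 * a * ∑ z ∈ univ.filter (fun z : QuadraticAlgebra R a 0 => norm z = c), z.im ^ 2 =
      -(#{z : QuadraticAlgebra R a 0 | norm z = c} * c) := by
  set S := univ.filter (fun z : QuadraticAlgebra R a 0 => norm z = c)
  have hre : ∑ z ∈ S, (z.re * z.re + a * z.im * z.im) = 0 := by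
    simpa [sq, re_mul] using congrArg (reₗ a 0) (sum_sq_filter_norm_eq_zero h2 ha h1a c)
  have hnorm : ∑ z ∈ S, (z.re ^ 2 - a * z.im ^ 2) = #S * c := by
    rw [sum_congr rfl fun z hz => (norm_eq_re_sq_sub_mul_im_sq z).symm.trans (mem_filter.mp hz).2,
      sum_const, nsmul_eq_mul]
  calc 2 * a * ∑ z ∈ S, z.im ^ 2
      = ∑ z ∈ S, (z.re * z.re + a * z.im * z.im) - ∑ z ∈ S, (z.re ^ 2 - a * z.im ^ 2) := by
        rw [mul_sum, ← sum_sub_distrib]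
        exact sum_congr rfl fun _ _ => by ring
    _ = -(#S * c) := by rw [hre, hnorm, zero_sub]

end QuadraticAlgebra

theorem FiniteField.exists_sq_sub_mul_sq_eq {K : Type*} [Field K] [Fintype K]
    (hK : ringChar K ≠ 2) {e : K} (he : e ≠ 0) (c : K) : ∃ x y : K, x ^ 2 - e * y ^ 2 = c := by
  open Polynomial in
  obtain ⟨x, y, hxy⟩ := exists_root_sum_quadratic (f := X ^ 2 - C c) (g := C (-e) * X ^ 2)
    (degree_X_pow_sub_C two_pos c) (degree_C_mul_X_pow 2 (neg_ne_zero.mpr he))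
    (odd_card_of_char_ne_two hK)
  refine ⟨x, y, ?_⟩
  simp only [eval_sub, eval_pow, eval_X, eval_C, eval_mul] at hxy
  linear_combination hxy

theorem sq_sub_mul_sq_eq_zero_iff {K : Type*} [Field K] {e : K} (he : ¬IsSquare e) {x y : K} :
    x ^ 2 - e * y ^ 2 = 0 ↔ x = 0 ∧ y = 0 := by
  refine ⟨fun h => ?_, by rintro ⟨rfl, rfl⟩; ring⟩
  have hy : y = 0 := by
    by_contra hy
    exact he ⟨x / y, by field_simp; linear_combination -h⟩
  subst hy
  simpa using h

namespace ZMod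

variable {p : ℕ} [Fact p.Prime] {k : ℕ}

local notation "π" => ZMod.castHom (dvd_pow_self p (Nat.succ_ne_zero k)) (ZMod p)

theorem isUnit_iff_castHom_ne_zero (x : ZMod (p ^ (k + 1))) : IsUnit x ↔ π x ≠ 0 := by
  obtain ⟨m, rfl⟩ := ZMod.natCast_zmod_surjective x
  rw [map_natCast, ZMod.isUnit_iff_coprime, Nat.coprime_pow_right_iff k.succ_pos,
    Nat.coprime_comm, Nat.Prime.coprime_iff_not_dvd Fact.out, Ne, ZMod.natCast_eq_zero_iff]

theorem card_filter_not_isUnit_prime_pow : #{x : ZMod (p ^ (k + 1)) | ¬IsUnit x} = p ^ k := by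
  have h := card_filter_add_card_filter_not (s := univ)
    (p := fun x : ZMod (p ^ (k + 1)) => IsUnit x)
  rw [card_filter_isUnit, ZMod.card_units_eq_totient, Nat.totient_prime_pow Fact.out k.succ_pos,
    Nat.succ_sub_one] at h
  simp only [card_univ, ZMod.card, pow_succ] at h
  have : p ^ k * (p - 1) + p ^ k = p ^ k * p := by
    rw [← mul_add_one, Nat.sub_add_cancel (Fact.out : p.Prime).one_le]
  omega

theorem isSquare_of_castHom_eq_one (hp2 : p ≠ 2) {s : ZMod (p ^ (k + 1))} (hs : π s = 1) :
    IsSquare s := by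
  set U := univ.filter (fun x : ZMod (p ^ (k + 1)) => π x = 1)
  have hmaps : Set.MapsTo (· ^ 2) (U : Set (ZMod (p ^ (k + 1)))) U := fun x hx => by
    simp only [coe_filter, mem_univ, true_and, Set.mem_ofPred_eq, U, map_pow] at hx ⊢
    rw [hx, one_pow]
  have hinj : Set.InjOn (· ^ 2) (U : Set (ZMod (p ^ (k + 1)))) := fun x hx y hy hxy => by
    simp only [coe_filter, mem_univ, true_and, Set.mem_ofPred_eq, U] at hx hy
    have hsum : IsUnit (x + y) := by
      rw [isUnit_iff_castHom_ne_zero, map_add, hx, hy, one_add_one_eq_two]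
      exact Ring.two_ne_zero (by rwa [ZMod.ringChar_zmod_n])
    refine sub_eq_zero.mp (hsum.mul_right_eq_zero.mp ?_)
    linear_combination hxy
  obtain ⟨r, -, hr⟩ := surjOn_of_injOn_of_card_le _ hmaps hinj le_rfl
    (by simpa only [coe_filter, mem_univ, true_and, Set.mem_ofPred_eq, U] using hs)
  exact ⟨r, hr.symm.trans (sq r)⟩

theorem exists_norm_eq (hp2 : p ≠ 2) {e : ZMod (p ^ (k + 1))} (he : π e ≠ 0)
    {c : ZMod (p ^ (k + 1))} (hc : IsUnit c) :
    ∃ z : QuadraticAlgebra (ZMod (p ^ (k + 1))) e 0, norm z = c := by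
  obtain ⟨x, y, hxy⟩ := FiniteField.exists_sq_sub_mul_sq_eq
    (by rwa [ZMod.ringChar_zmod_n]) he (π c)
  obtain ⟨x, rfl⟩ := ZMod.castHom_surjective (dvd_pow_self p k.succ_ne_zero) x
  obtain ⟨y, rfl⟩ := ZMod.castHom_surjective (dvd_pow_self p k.succ_ne_zero) y
  set z₀ : QuadraticAlgebra (ZMod (p ^ (k + 1))) e 0 := ⟨x, y⟩
  have hz₀ : π (norm z₀) = π c := by
    rw [norm_eq_re_sq_sub_mul_im_sq, ← hxy, map_sub, map_mul, map_pow, map_pow]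
  have hu : IsUnit (norm z₀) :=
    (isUnit_iff_castHom_ne_zero _).mpr (hz₀ ▸ (isUnit_iff_castHom_ne_zero _).mp hc)
  obtain ⟨w, hw⟩ := hu.exists_right_inv
  obtain ⟨r, hr⟩ := isSquare_of_castHom_eq_one hp2 (s := c * w) (by
    rw [map_mul, ← hz₀, ← map_mul, hw, map_one])
  refine ⟨z₀ * algebraMap _ _ r, ?_⟩
  rw [map_mul, QuadraticAlgebra.norm_algebraMap, sq, ← hr, mul_left_comm, hw, mul_one]

theorem isUnit_norm_iff {e : ZMod (p ^ (k + 1))} (he : ¬IsSquare (π e))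
    (z : QuadraticAlgebra (ZMod (p ^ (k + 1))) e 0) :
    IsUnit (norm z) ↔ IsUnit z.re ∨ IsUnit z.im := by
  simp only [isUnit_iff_castHom_ne_zero, norm_eq_re_sq_sub_mul_im_sq, map_sub, map_mul, map_pow,
    Ne, sq_sub_mul_sq_eq_zero_iff he, not_and_or]

theorem card_filter_norm_eq (hp2 : p ≠ 2) {e : ZMod (p ^ (k + 1))} (he : ¬IsSquare (π e))
    {c : ZMod (p ^ (k + 1))} (hc : IsUnit c) :
    #{z : QuadraticAlgebra (ZMod (p ^ (k + 1))) e 0 | norm z = c} = (p + 1) * p ^ k := by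
  have he0 : π e ≠ 0 := fun h => he (h ▸ IsSquare.zero)
  obtain ⟨z₀, rfl⟩ := exists_norm_eq hp2 he0 hc
  rw [norm.card_filter_apply_eq_of_isUnit (isUnit_iff_norm_isUnit.mpr hc)]
  have hunits := norm.card_filter_isUnit_eq_mul fun b hb =>
    (exists_norm_eq hp2 he0 hb).imp fun z hz => ⟨isUnit_iff_norm_isUnit.mpr (hz ▸ hb), hz⟩
  have hnonunits :
      #{z : QuadraticAlgebra (ZMod (p ^ (k + 1))) e 0 | ¬IsUnit (norm z)} = p ^ k * p ^ k := by
    rw [← card_filter_not_isUnit_prime_pow (p := p) (k := k), ← card_product, ← filter_product,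
      univ_product_univ]
    exact (card_equiv (equivProd e 0).symm (by simp [isUnit_norm_iff he, not_or])).symm
  have htot := card_filter_add_card_filter_not (s := univ)
    (p := fun z : QuadraticAlgebra (ZMod (p ^ (k + 1))) e 0 => IsUnit (norm z))
  rw [card_univ, Fintype.card_congr (equivProd e 0), Fintype.card_prod, ZMod.card, hunits,
    hnonunits, ZMod.card_units_eq_totient, Nat.totient_prime_pow Fact.out k.succ_pos,
    Nat.succ_sub_one] at htot
  generalize #{z : QuadraticAlgebra (ZMod (p ^ (k + 1))) e 0 | norm z = 1} = F at htot ⊢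
  rw [pow_succ] at htot
  obtain ⟨m, rfl⟩ : ∃ m, p = m + 2 := ⟨p - 2, by have := (Fact.out : p.Prime).two_le; omega⟩
  refine Nat.eq_of_mul_eq_mul_left (by positivity : 0 < (m + 2) ^ k * (m + 1)) ?_
  rw [show m + 2 - 1 = m + 1 by omega] at htot
  linarith

end ZMod

/-- For every unit `c` of `ℤ/p^kℤ`, one has `2·ε·Σ b² = −(p+1)·p^(k-1)·c` in `ℤ/p^kℤ`, where the
sum runs over all pairs `(a, b) ∈ (ℤ/p^kℤ)²` with `a² − εb² = c`. -/
theorem sum_sq_snd_eq (p k : ℕ) [hp : Fact p.Prime] (hodd : Odd p) (hk : 1 ≤ k)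
    (ε : ℤ) (hε : ¬ IsSquare (ε : ZMod p)) (c : (ZMod (p ^ k))ˣ) :
    2 * (ε : ZMod (p ^ k)) * ∑ v ∈ Finset.univ.filter
        (fun v : ZMod (p ^ k) × ZMod (p ^ k) =>
          v.1 ^ 2 - (ε : ZMod (p ^ k)) * v.2 ^ 2 = (c : ZMod (p ^ k))), v.2 ^ 2
      = -((((p + 1) * p ^ (k - 1) : ℕ) : ZMod (p ^ k)) * (c : ZMod (p ^ k))) := by
  obtain ⟨k, rfl⟩ := Nat.exists_eq_add_of_le' hk
  have hp2 : p ≠ 2 := by rintro rfl; exact absurd hodd (by decide)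
  have hπ := ZMod.isUnit_iff_castHom_ne_zero (p := p) (k := k)
  have he : ¬IsSquare (ZMod.castHom (dvd_pow_self p k.succ_ne_zero) (ZMod p) ε) := by
    rwa [map_intCast]
  have h2 : IsUnit (2 : ZMod (p ^ (k + 1))) := by
    rw [hπ, map_ofNat]
    exact Ring.two_ne_zero (by rwa [ZMod.ringChar_zmod_n])
  have hε0 : IsUnit (ε : ZMod (p ^ (k + 1))) := by
    rw [hπ]
    exact fun h => he (h ▸ IsSquare.zero)
  have h1ε : IsUnit (1 - ε : ZMod (p ^ (k + 1))) := by
    rw [hπ, map_sub, map_one, sub_ne_zero]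
    exact fun h => he (h ▸ IsSquare.one)
  rw [QuadraticAlgebra.sum_filter_sq_sub_mul_sq_eq]
  refine (QuadraticAlgebra.two_mul_mul_sum_im_sq_filter_norm_eq h2 hε0 h1ε _).trans ?_
  rw [ZMod.card_filter_norm_eq hp2 he c.isUnit, Nat.add_sub_cancel]
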